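/- Let H be a complex Hilbert space and let P, Q : H → H be continuous linear projections (P ∘ P = P, Q ∘ Q = Q) with operator norm ‖P − Q‖ < 1. Then the image P(range Q) is dense in the range of P. -/

import Mathlib

/-!
For `g ∈ range P` orthogonal to `P (range Q)`, the vector `v = P† g` satisfies `P† v = v` and
`Q† v = 0`, so `‖v‖ = ‖(P† - Q†) v‖ ≤ ‖P - Q‖ ‖v‖` forces `v = 0`, and then
`‖g‖² = ⟪g, P g⟫ = ⟪P† g, g⟫ = 0`. Thus the closure of `P (range Q)`, which lies in the closed
subspace `range P`, has no orthogonal complement inside it.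
-/

open ContinuousLinearMap Submodule

theorem ContinuousLinearMap.eq_zero_of_apply_eq_self_of_apply_eq_zero {𝕜 E : Type*}
    [NontriviallyNormedField 𝕜] [NormedAddCommGroup E] [NormedSpace 𝕜 E] {P Q : E →L[𝕜] E}
    (hPQ : ‖P - Q‖ < 1) {v : E} (hPv : P v = v) (hQv : Q v = 0) : v = 0 := by
  have : ‖v‖ ≤ ‖P - Q‖ * ‖v‖ := by simpa [hPv, hQv] using (P - Q).le_opNorm v
  exact norm_eq_zero.mp (by nlinarith [norm_nonneg v])

section Hilbert

variable {𝕜 H : Type*} [RCLike 𝕜] [NormedAddCommGroup H] [InnerProductSpace 𝕜 H]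
  [CompleteSpace H]

theorem Submodule.topologicalClosure_eq_of_inf_orthogonal_eq_bot {M U : Submodule 𝕜 H}
    (hU : IsClosed (U : Set H)) (hMU : M ≤ U) (h : U ⊓ Mᗮ = ⊥) : M.topologicalClosure = U := by
  have hsup := sup_orthogonal_inf_of_hasOrthogonalProjection
    (M.topologicalClosure_minimal hMU hU)
  rwa [orthogonal_closure, inf_comm, h, sup_bot_eq] at hsup

theorem ContinuousLinearMap.range_inf_orthogonal_map_range_eq_bot {P Q : H →L[𝕜] H}
    (hP : IsIdempotentElem P) (hPQ : ‖P - Q‖ < 1) :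
    LinearMap.range (P : H →ₗ[𝕜] H) ⊓ ((LinearMap.range (Q : H →ₗ[𝕜] H)).map (P : H →ₗ[𝕜] H))ᗮ = ⊥ := by
  refine eq_bot_iff.mpr fun g ⟨hgP, hg⟩ ↦ ?_
  have hPg : P g = g := (LinearMap.IsIdempotentElem.mem_range_iff hP.toLinearMap).mp hgP
  have hQv : adjoint Q (adjoint P g) = 0 := ext_inner_left 𝕜 fun x ↦ by
    rw [adjoint_inner_right, adjoint_inner_right, inner_zero_right]
    exact (mem_orthogonal _ _).mp hg _ ⟨Q x, ⟨x, rfl⟩, rfl⟩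
  have hPv : adjoint P (adjoint P g) = adjoint P g := congr($hP.star g)
  have hv : adjoint P g = 0 := eq_zero_of_apply_eq_self_of_apply_eq_zero
    (by rwa [← map_sub, LinearIsometryEquiv.norm_map]) hPv hQv
  have : inner 𝕜 g g = 0 := by
    rw [← congrArg (inner 𝕜 g) hPg, ← adjoint_inner_left, hv, inner_zero_left]
  exact (mem_bot 𝕜).mpr (inner_self_eq_zero.mp this)

end Hilbert

theorem stmt3_general {H : Type*} [NormedAddCommGroup H] [InnerProductSpace ℂ H] [CompleteSpace H]
    (P Q : H →L[ℂ] H) (hP : P.comp P = P) (hPQ : ‖P - Q‖ < 1) :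
    (LinearMap.range (P : H →ₗ[ℂ] H) : Set H) ⊆ closure (P '' (LinearMap.range (Q : H →ₗ[ℂ] H) : Set H)) := by
  have hP : IsIdempotentElem P := hP
  have hclosure := topologicalClosure_eq_of_inf_orthogonal_eq_bot (by exact hP.isClosed_range)
    LinearMap.map_le_range (range_inf_orthogonal_map_range_eq_bot hP hPQ)
  rw [← hclosure, topologicalClosure_coe, map_coe]
  rfl

/-- If `P` and `Q` are continuous linear projections on a complex Hilbert space `H`
with `‖P - Q‖ < 1`, then `P(range Q)` is dense in the range of `P`. -/
theorem stmt3 {H : Type*} [NormedAddCommGroup H] [InnerProductSpace ℂ H] [CompleteSpace H]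
    (P Q : H →L[ℂ] H) (hP : P.comp P = P) (hQ : Q.comp Q = Q) (hPQ : ‖P - Q‖ < 1) :
    (LinearMap.range (P : H →ₗ[ℂ] H) : Set H) ⊆ closure (P '' (LinearMap.range (Q : H →ₗ[ℂ] H) : Set H)) :=
  stmt3_general P Q hP hPQ
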